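/- Let R be a ring Lie nilpotent of index n ≥ 2. Then every prime ideal P of R is completely prime: if ab ∈ P then a ∈ P or b ∈ P. -/

import Mathlib

/-- Left-normed commutator: `lnc x [x₂,…,x_k] = [x, x₂, …, x_k]*`. -/
def lnc {R : Type*} [Ring R] (x : R) (l : List R) : R :=
  l.foldl (fun a y => a * y - y * a) x

lemma lnc_append {R : Type*} [Ring R] (x : R) (l l' : List R) :
    lnc x (l ++ l') = lnc (lnc x l) l' := by
  simp [lnc, List.foldl_append]

lemma lnc_map {R S : Type*} [Ring R] [Ring S] (f : R →+* S) (x : R) (l : List R) :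
    lnc (f x) (l.map f) = f (lnc x l) := by
  induction l generalizing x with
  | nil => rfl
  | cons y t ih =>
    have h := ih (x * y - y * x)
    simp only [lnc, List.foldl_cons, List.map_cons] at h ⊢
    rw [← h]; congr 1; rw [map_sub, map_mul, map_mul]

/-- Key step: if `[u,y]` and `[u, u*y]` are central for all `y`, then in a
semiprime ring `u` is central. -/
lemma key_step {S : Type*} [Ring S]
    (hsp : ∀ x : S, (∀ r : S, x * r * x = 0) → x = 0)
    (u : S)
    (h : ∀ y z : S, (u * y - y * u) * z - z * (u * y - y * u) = 0) :
    ∀ y : S, u * y - y * u = 0 := by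
  intro y
  set c := u * y - y * u with hc
  have hcen : ∀ z : S, c * z = z * c := fun z => sub_eq_zero.mp (h y z)
  have hd : ∀ z : S, (u * c) * z = z * (u * c) := by
    intro z
    have h2 := h (u * y) z
    have e : u * (u * y) - (u * y) * u = u * c := by rw [hc]; noncomm_ring
    rw [e] at h2
    exact sub_eq_zero.mp h2
  have huz : ∀ z : S, (u * z - z * u) * c = 0 := by
    intro z
    have e : (u * z - z * u) * c = u * (z * c) - z * (u * c) := by noncomm_ring
    rw [e, ← hcen z, ← mul_assoc, hd z, sub_self]
  have hcc : c * c = 0 := by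
    have := huz y
    rwa [← hc] at this
  exact hsp c (fun r => by rw [mul_assoc, ← hcen r, ← mul_assoc, hcc, zero_mul])

/-- A semiprime ring which is Lie nilpotent is commutative. -/
lemma comm_of_semiprime {S : Type*} [Ring S] (n : ℕ) (hn : 1 ≤ n)
    (hL : ∀ (x : S) (l : List S), l.length = n → lnc x l = 0)
    (hsp : ∀ x : S, (∀ r : S, x * r * x = 0) → x = 0) :
    ∀ x y : S, x * y = y * x := by
  have step : ∀ m : ℕ, 1 ≤ m →
      (∀ (x : S) (l : List S), l.length = m + 1 → lnc x l = 0) →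
      (∀ (x : S) (l : List S), l.length = m → lnc x l = 0) := by
    intro m hm hM x l hl
    rcases l.eq_nil_or_concat with rfl | ⟨l', y, rfl⟩
    · simp at hl; omega
    · simp only [List.length_concat] at hl
      rw [List.concat_eq_append, lnc_append]
      set u := lnc x l' with hu
      have hcomm : ∀ w z : S, (u * w - w * u) * z - z * (u * w - w * u) = 0 := by
        intro w z
        have h2 := hM x (l' ++ [w, z]) (by simp; omega)
        rw [lnc_append, ← hu] at h2
        simpa [lnc] using h2
      have := key_step hsp u hcomm y
      simpa [lnc] using this
  have down : ∀ j : ℕ, j ≤ n - 1 →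
      ∀ (x : S) (l : List S), l.length = n - j → lnc x l = 0 := by
    intro j
    induction j with
    | zero => intro _ x l hl; exact hL x l (by simpa using hl)
    | succ k ih =>
      intro hk x l hl
      exact step (n - (k + 1)) (by omega)
        (fun x' l' hl' => ih (by omega) x' l' (by omega)) x l hl
  intro x y
  have h1 := down (n - 1) le_rfl x [y] (by simp; omega)
  simp only [lnc, List.foldl_cons, List.foldl_nil] at h1
  exact sub_eq_zero.mp h1

theorem prime_ideal_completely_prime {R : Type*} [Ring R] (n : ℕ) (hn : 2 ≤ n)
    (hLn : ∀ (x : R) (l : List R), l.length = n → lnc x l = 0)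
    (P : TwoSidedIdeal R) (hP : P ≠ ⊤)
    (hprime : ∀ a b : R, (∀ r : R, a * r * b ∈ P) → a ∈ P ∨ b ∈ P)
    (a b : R) (hab : a * b ∈ P) : a ∈ P ∨ b ∈ P := by
  let f : R →+* P.ringCon.Quotient := P.ringCon.mk'
  have hsurj : Function.Surjective f := fun s =>
    Quotient.inductionOn' s (fun x => ⟨x, rfl⟩)
  have hmem : ∀ x : R, f x = 0 ↔ x ∈ P := by
    intro x
    rw [TwoSidedIdeal.mem_iff]
    show (x : P.ringCon.Quotient) = 0 ↔ P.ringCon x 0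
    rw [← RingCon.coe_zero, RingCon.eq]
  have hlist : ∀ m : List P.ringCon.Quotient, ∃ l : List R, l.map f = m := by
    intro m
    induction m with
    | nil => exact ⟨[], rfl⟩
    | cons s t ih =>
      obtain ⟨l, hl⟩ := ih
      obtain ⟨x, hx⟩ := hsurj s
      exact ⟨x :: l, by simp [hx, hl]⟩
  have hLq : ∀ (x : P.ringCon.Quotient) (l : List P.ringCon.Quotient),
      l.length = n → lnc x l = 0 := by
    intro s m hm
    obtain ⟨x, rfl⟩ := hsurj s
    obtain ⟨l, rfl⟩ := hlist m
    have hlen : l.length = n := by simpa using hm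
    rw [lnc_map, hLn x l hlen, map_zero]
  have hspq : ∀ s : P.ringCon.Quotient, (∀ r, s * r * s = 0) → s = 0 := by
    intro s hs
    obtain ⟨x, rfl⟩ := hsurj s
    have hx : x ∈ P := by
      rcases hprime x x (fun r => (hmem _).mp
        (by rw [map_mul, map_mul]; exact hs (f r))) with h | h <;> exact h
    exact (hmem x).mpr hx
  have hcomm := comm_of_semiprime n (by omega) hLq hspq
  refine hprime a b (fun r => ?_)
  apply (hmem _).mp
  have hfab : f (a * b) = 0 := (hmem _).mpr hab
  calc f (a * r * b) = f a * f r * f b := by rw [map_mul, map_mul]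
    _ = f r * f a * f b := by rw [hcomm (f a) (f r)]
    _ = f r * f (a * b) := by rw [map_mul, mul_assoc]
    _ = 0 := by rw [hfab, mul_zero]
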